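/- The coefficient [zⁿ] of the series M_b(z) = (−1 + 12z − 24z² + (1−8z)^{3/2})/(32z²) satisfies [zⁿ] M_b(z) ~ c · n^{−5/2} · 8ⁿ as n → ∞, that is, there exists c > 0 with lim_{n→∞} [zⁿ]M_b(z) · n^{5/2} · 8^{−n} = c. -/

import Mathlib

open PowerSeries Filter

/-- The generalized binomial coefficient `r(r−1)⋯(r−n+1)/n!`. -/
noncomputable def genBinom (r : ℚ) (n : ℕ) : ℚ :=
  (∏ i ∈ Finset.range n, (r - i)) / n.factorial

/-- The binomial series `(1 − 8z)^{3/2} = ∑ C(3/2, n) (−8)ⁿ zⁿ`. -/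
noncomputable def oneSub8ZPow32 : PowerSeries ℚ :=
  PowerSeries.mk fun n => genBinom (3/2) n * (-8) ^ n

lemma genBinom_succ (r : ℚ) (n : ℕ) :
    genBinom r (n+1) = genBinom r n * (r - n) / (n+1) := by
  simp only [genBinom, Finset.prod_range_succ, Nat.factorial_succ]
  push_cast
  rw [div_mul_eq_mul_div, div_div, mul_comm ((n.factorial : ℚ)) ((n:ℚ)+1)]

lemma genBinom_key (n : ℕ) : genBinom (3/2) (n+2) * (-8)^(n+2)
    = 48 * 2^n * (Nat.centralBinom n : ℚ) / ((n+1)*(n+2)) := by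
  induction n with
  | zero => norm_num [genBinom, Finset.prod_range_succ, Nat.centralBinom]
  | succ n ih =>
    have hn1 : ((n:ℚ)+1) ≠ 0 := by positivity
    have hn2 : ((n:ℚ)+2) ≠ 0 := by positivity
    have hn3 : ((n:ℚ)+3) ≠ 0 := by positivity
    have h : ((n:ℚ) + 1) * (Nat.centralBinom (n+1) : ℚ)
        = 2 * (2*(n:ℚ)+1) * (Nat.centralBinom n : ℚ) := by
      exact_mod_cast congrArg (Nat.cast : ℕ → ℚ) (Nat.succ_mul_centralBinom_succ n)
    have hcb : (Nat.centralBinom (n+1) : ℚ)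
        = 2*(2*(n:ℚ)+1)*(Nat.centralBinom n : ℚ)/((n:ℚ)+1) := by
      rw [eq_div_iff hn1]; linear_combination h
    rw [show n+1+2 = (n+2)+1 from rfl, genBinom_succ, pow_succ]
    have : genBinom (3/2) (n+2) * (3/2 - ((n+2:ℕ):ℚ)) / (((n+2:ℕ):ℚ)+1) * ((-8)^(n+2) * (-8))
        = (genBinom (3/2) (n+2) * (-8)^(n+2)) * ((3/2 - ((n:ℚ)+2)) * (-8) / ((n:ℚ)+3)) := by
      push_cast; ring
    rw [this, ih, hcb]
    push_cast
    field_simp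
    ring

lemma coeff_Mb (Mb : PowerSeries ℚ)
    (hMb : (PowerSeries.C (32 : ℚ)) * PowerSeries.X ^ 2 * Mb
        = (PowerSeries.C (12 : ℚ)) * PowerSeries.X - 1
          - (PowerSeries.C (24 : ℚ)) * PowerSeries.X ^ 2 + oneSub8ZPow32)
    (n : ℕ) (hn : 1 ≤ n) :
    PowerSeries.coeff n Mb = 3/2 * 2^n * (Nat.centralBinom n : ℚ) / ((n+1)*(n+2)) := by
  have h := congrArg (PowerSeries.coeff (n+2)) hMb
  rw [show (PowerSeries.C (32 : ℚ)) * PowerSeries.X ^ 2 * Mb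
      = Mb * PowerSeries.X ^ 2 * PowerSeries.C (32 : ℚ) by ring] at h
  have h1 : n + 2 ≠ 1 := by omega
  have h2 : n + 2 ≠ 2 := by omega
  have h0 : n + 2 ≠ 0 := by omega
  rw [PowerSeries.coeff_mul_C, PowerSeries.coeff_mul_X_pow] at h
  simp only [map_add, map_sub, map_one, PowerSeries.coeff_C_mul, PowerSeries.coeff_X,
    PowerSeries.coeff_X_pow, oneSub8ZPow32, PowerSeries.coeff_mk, PowerSeries.coeff_one,
    if_neg h1, if_neg h2, if_neg h0, genBinom_key n] at h
  field_simp at h ⊢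
  linarith [h]

open Real Stirling in
lemma centralBinom_stirling (n : ℕ) (hn : 1 ≤ n) :
    (Nat.centralBinom n : ℝ) * Real.sqrt n / 4^n
      = stirlingSeq (2*n) / (stirlingSeq n)^2 := by
  have hfactN : Nat.centralBinom n * n.factorial * n.factorial = (2*n).factorial := by
    have := Nat.choose_mul_factorial_mul_factorial (show n ≤ 2*n by omega)
    rw [show 2*n - n = n by omega] at this
    simpa [Nat.centralBinom] using this
  have hfact : (Nat.centralBinom n : ℝ) * n.factorial * n.factorial = (2*n).factorial := by
    exact_mod_cast congrArg (Nat.cast : ℕ → ℝ) hfactN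
  have hnpos : (0:ℝ) < n := by exact_mod_cast hn
  have hb : Real.sqrt n > 0 := Real.sqrt_pos.mpr hnpos
  have hb2 : Real.sqrt n ^ 2 = n := Real.sq_sqrt hnpos.le
  have hc : Real.sqrt (2*(n:ℝ)) > 0 := Real.sqrt_pos.mpr (by positivity)
  have hc2 : Real.sqrt (2*(n:ℝ)) ^ 2 = 2*n := Real.sq_sqrt (by positivity)
  have ha : ((n:ℝ)/Real.exp 1)^n > 0 := by positivity
  set a : ℝ := ((n:ℝ)/Real.exp 1)^n with ha_def
  clear_value a
  have hs : stirlingSeq n > 0 := by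
    obtain ⟨m, rfl⟩ := Nat.exists_eq_add_of_le hn
    simpa [add_comm] using stirlingSeq'_pos m
  have hs2 : stirlingSeq (2*n) > 0 := by
    have h2n : 2*n = (2*n-1) + 1 := by omega
    rw [h2n]; exact stirlingSeq'_pos _
  have e1 : stirlingSeq n * (Real.sqrt (2*(n:ℝ)) * a) = (n.factorial : ℝ) := by
    rw [stirlingSeq, ha_def]
    exact div_mul_cancel₀ _ (by positivity)
  have h4 : Real.sqrt (2*((2*n:ℕ):ℝ)) = 2 * Real.sqrt n := by
    push_cast
    rw [show (2:ℝ)*(2*n) = 2^2*n by ring,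
      Real.sqrt_mul (by positivity), Real.sqrt_sq (by norm_num)]
  have h5 : (((2*n:ℕ):ℝ)/Real.exp 1)^(2*n) = 4^n * a^2 := by
    push_cast
    rw [show (2*(n:ℝ))/Real.exp 1 = 2 * ((n:ℝ)/Real.exp 1) by ring, mul_pow,
      ha_def, pow_mul, pow_mul]
    norm_num
    exact pow_right_comm _ _ _
  have e2 : stirlingSeq (2*n) * (2 * Real.sqrt n * (4^n * a^2)) = ((2*n).factorial : ℝ) := by
    rw [stirlingSeq, h4.symm, h5.symm]
    exact div_mul_cancel₀ _ (by rw [h4, h5]; positivity)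
  rw [← e1, ← e2] at hfact
  have A : (Nat.centralBinom n : ℝ) * stirlingSeq n^2 * (2*n) * a^2
      = stirlingSeq (2*n) * (2*Real.sqrt n) * 4^n * a^2 := by
    linear_combination hfact - (Nat.centralBinom n : ℝ) * stirlingSeq n^2 * a^2 * hc2
  have B : (Nat.centralBinom n : ℝ) * stirlingSeq n^2 * n
      = stirlingSeq (2*n) * Real.sqrt n * 4^n := by
    have A' := mul_right_cancel₀ (pow_ne_zero 2 ha.ne') A
    linarith [A']
  rw [div_eq_div_iff (by positivity) (by positivity)]
  have C : ((Nat.centralBinom n : ℝ) * Real.sqrt n * stirlingSeq n^2) * Real.sqrt n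
      = (stirlingSeq (2*n) * 4^n) * Real.sqrt n := by
    linear_combination B + (Nat.centralBinom n : ℝ) * stirlingSeq n^2 * hb2
  exact mul_right_cancel₀ hb.ne' C

/-- The coefficients of
`M_b(z) = (−1 + 12z − 24z² + (1−8z)^{3/2}) / (32z²)` satisfy
`[zⁿ] M_b(z) ~ c · n^{−5/2} · 8ⁿ` for some constant `c > 0`:
there exists `c > 0` with `[zⁿ]M_b · n^{5/2} · 8^{−n} → c`. -/
theorem bipartite_map_asymptotics (Mb : PowerSeries ℚ)
    (hMb : (PowerSeries.C (32 : ℚ)) * PowerSeries.X ^ 2 * Mb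
        = (PowerSeries.C (12 : ℚ)) * PowerSeries.X - 1
          - (PowerSeries.C (24 : ℚ)) * PowerSeries.X ^ 2 + oneSub8ZPow32) :
    ∃ c : ℝ, 0 < c ∧
      Filter.Tendsto
        (fun n : ℕ =>
          ((PowerSeries.coeff n Mb : ℚ) : ℝ)
            * (n : ℝ) ^ ((5 : ℝ) / 2) / 8 ^ n)
        Filter.atTop (nhds c) := by
  have hpi : Real.sqrt Real.pi > 0 := Real.sqrt_pos.mpr Real.pi_pos
  refine ⟨3/2 * (Real.sqrt Real.pi / (Real.sqrt Real.pi)^2) * (1 * 1), by positivity, ?_⟩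
  -- the auxiliary sequence
  set g : ℕ → ℝ := fun n => 3/2 * (Stirling.stirlingSeq (2*n) / (Stirling.stirlingSeq n)^2)
      * ((n:ℝ)/((n:ℝ)+1) * ((n:ℝ)/((n:ℝ)+2))) with hg
  have hgt : Tendsto g atTop
      (nhds (3/2 * (Real.sqrt Real.pi / (Real.sqrt Real.pi)^2) * (1 * 1))) := by
    have h2 : Tendsto (fun n : ℕ => 2*n) atTop atTop :=
      tendsto_atTop_atTop_of_monotone (fun a b h => by omega) (fun b => ⟨b, by omega⟩)
    have hA : Tendsto (fun n : ℕ => Stirling.stirlingSeq (2*n)) atTop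
        (nhds (Real.sqrt Real.pi)) := Stirling.tendsto_stirlingSeq_sqrt_pi.comp h2
    have hB : Tendsto (fun n : ℕ => (Stirling.stirlingSeq n)^2) atTop
        (nhds ((Real.sqrt Real.pi)^2)) := Stirling.tendsto_stirlingSeq_sqrt_pi.pow 2
    have hC : Tendsto (fun n : ℕ => (n:ℝ)/((n:ℝ)+1)) atTop (nhds 1) :=
      tendsto_natCast_div_add_atTop 1
    have hD : Tendsto (fun n : ℕ => (n:ℝ)/((n:ℝ)+2)) atTop (nhds 1) :=
      tendsto_natCast_div_add_atTop 2
    exact (tendsto_const_nhds.mul (hA.div hB (by positivity))).mul (hC.mul hD)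
  refine hgt.congr' ?_
  filter_upwards [eventually_ge_atTop 1] with n hn
  have hnpos : (0:ℝ) < n := by exact_mod_cast hn
  have hcoeff := coeff_Mb Mb hMb n hn
  have hcast : ((PowerSeries.coeff n Mb : ℚ) : ℝ)
      = 3/2 * 2^n * (Nat.centralBinom n : ℝ) / (((n:ℝ)+1)*((n:ℝ)+2)) := by
    rw [hcoeff]; push_cast; ring
  have hrpow : (n:ℝ) ^ ((5:ℝ)/2) = (n:ℝ)^(2:ℕ) * Real.sqrt n := by
    rw [show (5:ℝ)/2 = (2:ℕ) + 1/2 by norm_num, Real.rpow_add hnpos,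
      Real.rpow_natCast, ← Real.sqrt_eq_rpow]
  have h8 : (8:ℝ)^n = 4^n * 2^n := by
    rw [show (8:ℝ) = 4*2 by norm_num, mul_pow]
  have hstir := centralBinom_stirling n hn
  rw [hg]
  simp only
  rw [← hstir, hcast, hrpow, h8]
  have h4 : (4:ℝ)^n ≠ 0 := by positivity
  have h2 : (2:ℝ)^n ≠ 0 := by positivity
  field_simp
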